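/- Applicative bisimilarity is sound with respect to contextual equivalence in λ_S: if t0 ≈ t1 then t0 ≡C t1. -/

import Mathlib

namespace LamS

/-- Terms of the λ-calculus with shift and reset, in de Bruijn representation.
    `lam` and `shift` bind variable 0. -/
inductive Tm : Type
  | var : ℕ → Tm
  | lam : Tm → Tm
  | app : Tm → Tm → Tm
  | shift : Tm → Tm
  | reset : Tm → Tm
  deriving DecidableEq

open Tm

/-- Lift (shift up) free de Bruijn indices `≥ c` by `d`. -/
def liftT (d : ℕ) : ℕ → Tm → Tm
  | c, var n => if n < c then var n else var (n + d)
  | c, lam t => lam (liftT d (c+1) t)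
  | c, app a b => app (liftT d c a) (liftT d c b)
  | c, shift t => shift (liftT d (c+1) t)
  | c, reset t => reset (liftT d c t)

/-- Capture-avoiding substitution `t[j := s]` (de Bruijn). -/
def substT : ℕ → Tm → Tm → Tm
  | j, s, var n => if n = j then liftT j 0 s else if j < n then var (n-1) else var n
  | j, s, lam t => lam (substT (j+1) s t)
  | j, s, app a b => app (substT j s a) (substT j s b)
  | j, s, shift t => shift (substT (j+1) s t)
  | j, s, reset t => reset (substT j s t)

/-- Values are λ-abstractions. -/
def IsValue (t : Tm) : Prop := ∃ b, t = lam b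

/-- All free variables are `< n`. -/
def ClosedUnder : ℕ → Tm → Prop
  | n, var m => m < n
  | n, lam t => ClosedUnder (n+1) t
  | n, app a b => ClosedUnder n a ∧ ClosedUnder n b
  | n, shift t => ClosedUnder (n+1) t
  | n, reset t => ClosedUnder n t

def Closed (t : Tm) : Prop := ClosedUnder 0 t

/-- Pure evaluation contexts, interpreted inside-out:
    `appV b E` is `E[(λ.b) []]` and `appL E t` is `E[[] t]`. -/
inductive PCtx : Type
  | hole : PCtx
  | appV : Tm → PCtx → PCtx
  | appL : PCtx → Tm → PCtx
  deriving DecidableEq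

def PCtx.plug : PCtx → Tm → Tm
  | .hole, t => t
  | .appV b E, t => E.plug (app (lam b) t)
  | .appL E s, t => E.plug (app t s)

def PCtx.liftC (d : ℕ) : ℕ → PCtx → PCtx
  | _, .hole => .hole
  | c, .appV b E => .appV (liftT d (c+1) b) (PCtx.liftC d c E)
  | c, .appL E s => .appL (PCtx.liftC d c E) (liftT d c s)

/-- Composition of pure contexts: `(E.comp E').plug t = E.plug (E'.plug t)`. -/
def PCtx.comp : PCtx → PCtx → PCtx
  | E, .hole => E
  | E, .appV b E' => .appV b (E.comp E')
  | E, .appL E' s => .appL (E.comp E') s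

/-- The captured delimited continuation `λx.⟨E[x]⟩`. -/
def contOf (E : PCtx) : Tm := lam (reset ((PCtx.liftC 1 0 E).plug (var 0)))

/-- Call-by-value evaluation contexts, interpreted inside-out. -/
inductive ECtx : Type
  | hole : ECtx
  | appV : Tm → ECtx → ECtx
  | appL : ECtx → Tm → ECtx
  | resetC : ECtx → ECtx
  deriving DecidableEq

def ECtx.plug : ECtx → Tm → Tm
  | .hole, t => t
  | .appV b F, t => F.plug (app (lam b) t)
  | .appL F s, t => F.plug (app t s)
  | .resetC F, t => F.plug (reset t)

def ClosedECtx : ECtx → Prop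
  | .hole => True
  | .appV b F => ClosedUnder 1 b ∧ ClosedECtx F
  | .appL F s => ClosedECtx F ∧ Closed s
  | .resetC F => ClosedECtx F

/-- One-step reduction of λ_S. -/
inductive Red : Tm → Tm → Prop
  | beta (F : ECtx) (t v : Tm) (hv : IsValue v) :
      Red (F.plug (app (lam t) v)) (F.plug (substT 0 v t))
  | cap (F : ECtx) (E : PCtx) (t : Tm) :
      Red (F.plug (reset (E.plug (shift t)))) (F.plug (reset (substT 0 (contOf E) t)))
  | res (F : ECtx) (v : Tm) (hv : IsValue v) :
      Red (F.plug (reset v)) (F.plug v)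

def RedStar : Tm → Tm → Prop := Relation.ReflTransGen Red

/-- A term is stuck if it is not a value and cannot reduce. -/
def Stuck (t : Tm) : Prop := ¬ IsValue t ∧ ∀ u, ¬ Red t u

/-- Evaluation: reduce to an irreducible term. -/
def Eval (t t' : Tm) : Prop := RedStar t t' ∧ ∀ u, ¬ Red t' u

def IsRedex (r : Tm) : Prop :=
  (∃ t v, IsValue v ∧ r = app (lam t) v) ∨
  (∃ E s, r = reset (PCtx.plug E (shift s))) ∨
  (∃ v, IsValue v ∧ r = reset v)

/-- Labels of the LTS. -/
inductive Label : Type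
  | tau : Label
  | val : Tm → Label
  | ctx : PCtx → Label

/-- The labelled transition system for λ_S. -/
inductive Step : Tm → Label → Tm → Prop
  | beta {t v : Tm} (hv : IsValue v) :
      Step (app (lam t) v) .tau (substT 0 v t)
  | resetVal {v : Tm} (hv : IsValue v) :
      Step (reset v) .tau v
  | appL {t0 t0' t1 : Tm} :
      Step t0 .tau t0' → Step (app t0 t1) .tau (app t0' t1)
  | appR {v t t' : Tm} (hv : IsValue v) :
      Step t .tau t' → Step (app v t) .tau (app v t')
  | resetT {t t' : Tm} :
      Step t .tau t' → Step (reset t) .tau (reset t')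
  | resetCap {t t' : Tm} :
      Step t (.ctx .hole) t' → Step (reset t) .tau t'
  | lamApp {t v : Tm} (hv : IsValue v) :
      Step (lam t) (.val v) (substT 0 v t)
  | shiftCap {t : Tm} (E : PCtx) :
      Step (shift t) (.ctx E) (reset (substT 0 (contOf E) t))
  | capL {t0 t0' t1 : Tm} {E : PCtx} :
      Step t0 (.ctx (.appL E t1)) t0' → Step (app t0 t1) (.ctx E) t0'
  | capR {b t t' : Tm} {E : PCtx} :
      Step t (.ctx (.appV b E)) t' → Step (app (lam b) t) (.ctx E) t'

def TauStar : Tm → Tm → Prop := Relation.ReflTransGen (fun a b => Step a .tau b)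

/-- Weak delay transition: τ-steps, then an `l`-step if `l ≠ τ`. -/
def Weak (t : Tm) (l : Label) (t' : Tm) : Prop :=
  match l with
  | .tau => TauStar t t'
  | _ => ∃ u, TauStar t u ∧ Step u l t'

/-- Applicative simulation. -/
def IsSim (R : Tm → Tm → Prop) : Prop :=
  ∀ ⦃t0 t1⦄, R t0 t1 → ∀ ⦃l t0'⦄, Step t0 l t0' →
    ∃ t1', Weak t1 l t1' ∧ R t0' t1'

def IsBisim (R : Tm → Tm → Prop) : Prop := IsSim R ∧ IsSim (flip R)

/-- Applicative bisimilarity: the largest applicative bisimulation. -/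
def Bisim (t0 t1 : Tm) : Prop := ∃ R, IsBisim R ∧ R t0 t1

/-- Big-step applicative simulation. -/
def IsBigSim (R : Tm → Tm → Prop) : Prop :=
  ∀ ⦃t0 t1⦄, R t0 t1 → ∀ ⦃l t0'⦄, l ≠ Label.tau → Weak t0 l t0' →
    ∃ t1', Weak t1 l t1' ∧ R t0' t1'

def IsBigBisim (R : Tm → Tm → Prop) : Prop := IsBigSim R ∧ IsBigSim (flip R)

/-- Big-step applicative bisimilarity. -/
def BigBisim (t0 t1 : Tm) : Prop := ∃ R, IsBigBisim R ∧ R t0 t1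

/-- General contexts. -/
inductive Ctx : Type
  | hole : Ctx
  | lam : Ctx → Ctx
  | appL : Ctx → Tm → Ctx
  | appR : Tm → Ctx → Ctx
  | shift : Ctx → Ctx
  | reset : Ctx → Ctx

/-- Plugging a term in a general context (free variables may be captured). -/
def Ctx.plug : Ctx → Tm → Tm
  | .hole, t => t
  | .lam C, t => Tm.lam (C.plug t)
  | .appL C s, t => Tm.app (C.plug t) s
  | .appR s C, t => Tm.app s (C.plug t)
  | .shift C, t => Tm.shift (C.plug t)
  | .reset C, t => Tm.reset (C.plug t)

def CtxClosedUnder : ℕ → Ctx → Prop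
  | _, .hole => True
  | n, .lam C => CtxClosedUnder (n+1) C
  | n, .appL C s => CtxClosedUnder n C ∧ ClosedUnder n s
  | n, .appR s C => ClosedUnder n s ∧ CtxClosedUnder n C
  | n, .shift C => CtxClosedUnder (n+1) C
  | n, .reset C => CtxClosedUnder n C

def ClosedCtx (C : Ctx) : Prop := CtxClosedUnder 0 C

def EvalsToValue (t : Tm) : Prop := ∃ v, IsValue v ∧ Eval t v

def EvalsToStuck (t : Tm) : Prop := ∃ s, Stuck s ∧ Eval t s

/-- Contextual equivalence on closed terms. -/
def CtxEquiv (t0 t1 : Tm) : Prop :=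
  ∀ C : Ctx, ClosedCtx C →
    (EvalsToValue (C.plug t0) ↔ EvalsToValue (C.plug t1)) ∧
    (EvalsToStuck (C.plug t0) ↔ EvalsToStuck (C.plug t1))

/-- Contextual equivalence restricted to evaluation contexts. -/
def ECtxEquiv (t0 t1 : Tm) : Prop :=
  ∀ F : ECtx, ClosedECtx F →
    (EvalsToValue (F.plug t0) ↔ EvalsToValue (F.plug t1)) ∧
    (EvalsToStuck (F.plug t0) ↔ EvalsToStuck (F.plug t1))

/-- Lifting a substitution under a binder. -/
def liftSub (σ : ℕ → Tm) : ℕ → Tm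
  | 0 => var 0
  | n+1 => liftT 1 0 (σ n)

/-- Apply a substitution to all free variables of a term. -/
def applySub (σ : ℕ → Tm) : Tm → Tm
  | var n => σ n
  | lam t => lam (applySub (liftSub σ) t)
  | app a b => app (applySub σ a) (applySub σ b)
  | shift t => shift (applySub (liftSub σ) t)
  | reset t => reset (applySub σ t)

/-- A closing substitution maps every variable to a closed value. -/
def ClosingSub (σ : ℕ → Tm) : Prop := ∀ n, IsValue (σ n) ∧ Closed (σ n)

/-- Open extension of a relation on closed terms. -/
def OpenExt (R : Tm → Tm → Prop) (t0 t1 : Tm) : Prop :=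
  ∀ σ, ClosingSub σ → R (applySub σ t0) (applySub σ t1)

/-- Howe's closure of applicative bisimilarity (compatible refinement rules inlined). -/
inductive Howe : Tm → Tm → Prop
  | base {t0 t1} : OpenExt Bisim t0 t1 → Howe t0 t1
  | right {t0 t2 t1} : Howe t0 t2 → OpenExt Bisim t2 t1 → Howe t0 t1
  | compVar (n : ℕ) : Howe (var n) (var n)
  | compLam {t0 t1} : Howe t0 t1 → Howe (lam t0) (lam t1)
  | compApp {a0 a1 b0 b1} : Howe a0 a1 → Howe b0 b1 → Howe (app a0 b0) (app a1 b1)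
  | compShift {t0 t1} : Howe t0 t1 → Howe (shift t0) (shift t1)
  | compReset {t0 t1} : Howe t0 t1 → Howe (reset t0) (reset t1)

/-- Howe's closure restricted to closed terms. -/
def HoweC (t0 t1 : Tm) : Prop := Closed t0 ∧ Closed t1 ∧ Howe t0 t1

/-- Extension of Howe's closure to pure contexts. -/
inductive PCtxHowe : PCtx → PCtx → Prop
  | hole : PCtxHowe .hole .hole
  | appV {b0 b1 E0 E1} : Howe b0 b1 → PCtxHowe E0 E1 → PCtxHowe (.appV b0 E0) (.appV b1 E1)
  | appL {E0 E1 t0 t1} : PCtxHowe E0 E1 → Howe t0 t1 → PCtxHowe (.appL E0 t0) (.appL E1 t1)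

/-- Extension of Howe's closure to labels. -/
def LabHowe : Label → Label → Prop
  | .tau, .tau => True
  | .val v0, .val v1 => Closed v0 ∧ Closed v1 ∧ Howe v0 v1
  | .ctx E0, .ctx E1 => PCtxHowe E0 E1
  | _, _ => False

/-- ω = λx. x x -/
def omegaTm : Tm := lam (app (var 0) (var 0))

/-- Ω = ω ω, the standard diverging term. -/
def OmegaTm : Tm := app omegaTm omegaTm

/-- Every τ-reachable term can do a τ-step: only infinite τ-sequences. -/
def Diverges (t : Tm) : Prop := ∀ u, TauStar t u → ∃ u', Step u .tau u'

/-- No weak non-τ transition. -/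
def NoObs (t : Tm) : Prop := ∀ l t', l ≠ Label.tau → ¬ Weak t l t'

/-!
Howe's method. The Howe closure of (the open extension of) bisimilarity contains bisimilarity and
is a substitutive congruence. On closed terms it is moreover a simulation up to weak transitions:
this key lemma is proved by induction on the number of uses of the transitivity rule `right` and
then on the transition, with β-redexes handled by the fact that a term related to a λ-abstraction
τ-reduces to a related one. Congruence relates `C[t0]` and `C[t1]`, and the simulation transports
evaluation to a value, as well as evaluation to a stuck term, since a closed term is stuck exactly
when it can capture the empty context.
-/

/-! ### Substitution -/

theorem closedUnder_mono {t : Tm} {n m : ℕ} (h : ClosedUnder n t) (hnm : n ≤ m) :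
    ClosedUnder m t := by
  induction t generalizing n m with
  | var k => exact lt_of_lt_of_le h hnm
  | lam b ih | shift b ih => exact ih h (by omega)
  | app a b iha ihb => exact ⟨iha h.1 hnm, ihb h.2 hnm⟩
  | reset b ih => exact ih h hnm

theorem exists_closedUnder (t : Tm) : ∃ m, ClosedUnder m t := by
  induction t with
  | var k => exact ⟨k + 1, Nat.lt_succ_self k⟩
  | lam b ih | shift b ih =>
    obtain ⟨m, hm⟩ := ih
    exact ⟨m, (closedUnder_mono hm (Nat.le_succ m) : ClosedUnder (m + 1) b)⟩
  | app a b iha ihb =>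
    obtain ⟨m, hm⟩ := iha
    obtain ⟨m', hm'⟩ := ihb
    exact ⟨max m m', closedUnder_mono hm (le_max_left _ _),
      closedUnder_mono hm' (le_max_right _ _)⟩
  | reset b ih => exact ih

theorem liftT_of_closedUnder {t : Tm} {c : ℕ} (d : ℕ) (h : ClosedUnder c t) :
    liftT d c t = t := by
  induction t generalizing c with
  | var k => simp [liftT, show k < c from h]
  | lam b ih | shift b ih => simp [liftT, ih h]
  | app a b iha ihb => simp [liftT, iha h.1, ihb h.2]
  | reset b ih => simp [liftT, ih h]

theorem liftT_liftT_comm {t : Tm} {d d' c c' : ℕ} (h : c' ≤ c) :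
    liftT d' c' (liftT d c t) = liftT d (c + d') (liftT d' c' t) := by
  induction t generalizing c c' with
  | var k =>
    simp only [liftT]
    split_ifs <;> simp only [liftT] <;> split_ifs <;>
      first | rfl | (simp only [Tm.var.injEq]; omega)
  | lam b ih | shift b ih =>
    simp only [liftT]
    rw [ih (Nat.succ_le_succ h), Nat.succ_add]
  | app a b iha ihb => simp only [liftT, iha h, ihb h]
  | reset b ih => simp only [liftT, ih h]

theorem closedUnder_liftT {t : Tm} {n d c : ℕ} (h : ClosedUnder n t) (hc : c ≤ n) :
    ClosedUnder (n + d) (liftT d c t) := by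
  induction t generalizing n c with
  | var k =>
    simp only [liftT]
    split_ifs <;> simp only [ClosedUnder] at h ⊢ <;> omega
  | lam b ih | shift b ih =>
    simpa only [liftT, ClosedUnder, Nat.add_right_comm] using ih h (Nat.succ_le_succ hc)
  | app a b iha ihb => exact ⟨iha h.1 hc, ihb h.2 hc⟩
  | reset b ih => exact ih h hc

theorem applySub_congr {t : Tm} {m : ℕ} {σ σ' : ℕ → Tm} (h : ClosedUnder m t)
    (hσ : ∀ k < m, σ k = σ' k) : applySub σ t = applySub σ' t := by
  induction t generalizing m σ σ' with
  | var k => exact hσ k h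
  | lam b ih | shift b ih =>
    simp only [applySub]
    rw [ih (m := m + 1) h]
    rintro (_ | k) hk
    · rfl
    · simp only [liftSub, hσ k (by omega)]
  | app a b iha ihb => simp only [applySub, iha h.1 hσ, ihb h.2 hσ]
  | reset b ih => simp only [applySub, ih h hσ]

theorem liftSub_var : liftSub (fun n => var n) = fun n => var n := by
  funext n
  cases n <;> simp [liftSub, liftT]

theorem applySub_var (t : Tm) : applySub (fun n => var n) t = t := by
  induction t with
  | var k => rfl
  | lam b ih | shift b ih => simp only [applySub, liftSub_var, ih]
  | app a b iha ihb => simp only [applySub, iha, ihb]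
  | reset b ih => simp only [applySub, ih]

theorem applySub_of_closed {t : Tm} (σ : ℕ → Tm) (h : Closed t) : applySub σ t = t :=
  (applySub_congr (m := 0) h fun _ hk => absurd hk (Nat.not_lt_zero _)).trans (applySub_var t)

theorem liftSub_ite_comm (σ : ℕ → Tm) (c d : ℕ) :
    (fun n => if n < c + 1 then liftSub σ n else liftSub σ (n + d)) =
      liftSub (fun n => if n < c then σ n else σ (n + d)) := by
  funext n
  cases n with
  | zero => simp [liftSub]
  | succ n =>
    by_cases h : n < c
    · simp [liftSub, h]
    · simp [liftSub, h, Nat.add_right_comm]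

theorem applySub_liftT {t : Tm} {c d : ℕ} {σ : ℕ → Tm} :
    applySub σ (liftT d c t) = applySub (fun n => if n < c then σ n else σ (n + d)) t := by
  induction t generalizing c σ with
  | var k =>
    simp only [liftT]
    split_ifs with h <;> simp [applySub, h]
  | lam b ih | shift b ih => simp only [liftT, applySub, ih, liftSub_ite_comm]
  | app a b iha ihb => simp only [liftT, applySub, iha, ihb]
  | reset b ih => simp only [liftT, applySub, ih]

theorem liftT_liftSub (σ : ℕ → Tm) (d c : ℕ) :
    (fun n => liftT d (c + 1) (liftSub σ n)) = liftSub (fun n => liftT d c (σ n)) := by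
  funext n
  cases n with
  | zero => simp [liftSub, liftT]
  | succ n => exact (liftT_liftT_comm (Nat.zero_le c)).symm

theorem liftT_applySub {t : Tm} {c d : ℕ} {σ : ℕ → Tm} :
    liftT d c (applySub σ t) = applySub (fun n => liftT d c (σ n)) t := by
  induction t generalizing c σ with
  | var k => rfl
  | lam b ih | shift b ih => simp only [applySub, liftT, ih, liftT_liftSub]
  | app a b iha ihb => simp only [applySub, liftT, iha, ihb]
  | reset b ih => simp only [applySub, liftT, ih]

theorem applySub_liftSub (σ σ' : ℕ → Tm) :
    (fun n => applySub (liftSub σ') (liftSub σ n)) = liftSub (fun n => applySub σ' (σ n)) := by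
  funext n
  cases n with
  | zero => rfl
  | succ n =>
    simp only [liftSub, applySub_liftT, liftT_applySub, Nat.not_lt_zero, if_false]

theorem applySub_applySub {t : Tm} {σ σ' : ℕ → Tm} :
    applySub σ' (applySub σ t) = applySub (fun n => applySub σ' (σ n)) t := by
  induction t generalizing σ σ' with
  | var k => rfl
  | lam b ih | shift b ih => simp only [applySub, ih, applySub_liftSub]
  | app a b iha ihb => simp only [applySub, iha, ihb]
  | reset b ih => simp only [applySub, ih]

theorem closedUnder_applySub {t : Tm} {m n : ℕ} {σ : ℕ → Tm} (h : ClosedUnder m t)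
    (hσ : ∀ k < m, ClosedUnder n (σ k)) : ClosedUnder n (applySub σ t) := by
  induction t generalizing m n σ with
  | var k => exact hσ k h
  | lam b ih | shift b ih =>
    refine ih (m := m + 1) h ?_
    rintro (_ | k) hk
    · exact Nat.zero_lt_succ n
    · exact closedUnder_liftT (hσ k (by omega)) (Nat.zero_le n)
  | app a b iha ihb => exact ⟨iha h.1 hσ, ihb h.2 hσ⟩
  | reset b ih => exact ih h hσ

theorem closedUnder_applySub_closing {t : Tm} {n : ℕ} {σ : ℕ → Tm} (hσ : ClosingSub σ) :
    ClosedUnder n (applySub σ t) := by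
  obtain ⟨m, hm⟩ := exists_closedUnder t
  exact closedUnder_applySub hm fun k _ => closedUnder_mono (hσ k).2 (Nat.zero_le n)

def substSub (j : ℕ) (s : Tm) (n : ℕ) : Tm :=
  if n = j then s else if j < n then var (n - 1) else var n

theorem substSub_succ {j : ℕ} {s : Tm} (hs : Closed s) :
    substSub (j + 1) s = liftSub (substSub j s) := by
  funext n
  cases n with
  | zero => simp [substSub, liftSub]
  | succ n =>
    simp only [substSub, liftSub, Nat.add_right_cancel_iff, Nat.add_lt_add_iff_right]
    split_ifs with h1 h2
    · exact (liftT_of_closedUnder 1 (closedUnder_mono hs (Nat.zero_le 0))).symm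
    · simp [liftT]; omega
    · simp [liftT]

theorem substT_eq_applySub {t s : Tm} {j : ℕ} (hs : Closed s) :
    substT j s t = applySub (substSub j s) t := by
  induction t generalizing j with
  | var k =>
    simp only [substT, applySub, substSub]
    split_ifs
    exacts [liftT_of_closedUnder j hs, rfl, rfl]
  | lam b ih | shift b ih => simp only [substT, applySub, ih, substSub_succ hs]
  | app a b iha ihb => simp only [substT, applySub, iha, ihb]
  | reset b ih => simp only [substT, applySub, ih]

theorem closedUnder_substT {t v : Tm} {m : ℕ} (hv : Closed v) (ht : ClosedUnder (m + 1) t) :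
    ClosedUnder m (substT 0 v t) := by
  rw [substT_eq_applySub hv]
  refine closedUnder_applySub ht ?_
  rintro (_ | k) hk
  · exact closedUnder_mono hv (Nat.zero_le m)
  · simpa [substSub, ClosedUnder] using hk

/-! ### Pure contexts and capture -/

def PCtxClosedUnder : ℕ → PCtx → Prop
  | _, .hole => True
  | n, .appV b E => ClosedUnder (n + 1) b ∧ PCtxClosedUnder n E
  | n, .appL E s => PCtxClosedUnder n E ∧ ClosedUnder n s

theorem PCtxClosedUnder.mono {E : PCtx} {n m : ℕ} (h : PCtxClosedUnder n E) (hnm : n ≤ m) :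
    PCtxClosedUnder m E := by
  induction E with
  | hole => trivial
  | appV b E ih => exact ⟨closedUnder_mono h.1 (Nat.succ_le_succ hnm), ih h.2⟩
  | appL E s ih => exact ⟨ih h.1, closedUnder_mono h.2 hnm⟩

theorem closedUnder_pctxPlug_iff {E : PCtx} {t : Tm} {n : ℕ} :
    ClosedUnder n (E.plug t) ↔ PCtxClosedUnder n E ∧ ClosedUnder n t := by
  induction E generalizing t with
  | hole => simp [PCtx.plug, PCtxClosedUnder]
  | appV b E ih =>
    simp only [PCtx.plug, PCtxClosedUnder, ClosedUnder, ih]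
    tauto
  | appL E s ih =>
    simp only [PCtx.plug, PCtxClosedUnder, ClosedUnder, ih]
    tauto

theorem liftC_of_closedUnder {E : PCtx} {d c : ℕ} (h : PCtxClosedUnder c E) :
    PCtx.liftC d c E = E := by
  induction E with
  | hole => rfl
  | appV b E ih => simp only [PCtx.liftC, liftT_of_closedUnder d h.1, ih h.2]
  | appL E s ih => simp only [PCtx.liftC, liftT_of_closedUnder d h.2, ih h.1]

theorem closed_contOf {E : PCtx} (h : PCtxClosedUnder 0 E) : Closed (contOf E) := by
  change ClosedUnder 1 ((PCtx.liftC 1 0 E).plug (var 0))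
  rw [liftC_of_closedUnder h, closedUnder_pctxPlug_iff]
  exact ⟨h.mono (Nat.zero_le 1), Nat.zero_lt_one⟩

theorem PCtx.plug_comp (E E' : PCtx) (t : Tm) : (E.comp E').plug t = E.plug (E'.plug t) := by
  induction E' generalizing t with
  | hole => rfl
  | appV b E' ih => exact ih _
  | appL E' s ih => exact ih _

theorem PCtx.hole_comp (E : PCtx) : PCtx.hole.comp E = E := by
  induction E with
  | hole => rfl
  | appV b E ih | appL E b ih => simp only [PCtx.comp, ih]

theorem PCtx.comp_assoc (A B C : PCtx) : (A.comp B).comp C = A.comp (B.comp C) := by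
  induction C with
  | hole => rfl
  | appV b C ih | appL C b ih => simp only [PCtx.comp, ih]

theorem PCtxClosedUnder.comp {A B : PCtx} {n : ℕ} (hA : PCtxClosedUnder n A)
    (hB : PCtxClosedUnder n B) : PCtxClosedUnder n (A.comp B) := by
  induction B with
  | hole => exact hA
  | appV b B ih => exact ⟨hB.1, ih hB.2⟩
  | appL B s ih => exact ⟨ih hB.1, hB.2⟩

theorem step_ctx_plug (E₀ : PCtx) {t : Tm} (g : PCtx → Tm) (h : ∀ E, Step t (.ctx E) (g E))
    (E : PCtx) : Step (E₀.plug t) (.ctx E) (g (E.comp E₀)) := by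
  induction E₀ generalizing t g with
  | hole => exact h E
  | appV b E₀ ih => exact ih (fun E => g (.appV b E)) (fun E => .capR (h (.appV b E)))
  | appL E₀ s ih => exact ih (fun E => g (.appL E s)) (fun E => .capL (h (.appL E s)))

theorem step_plug_shift (E₀ : PCtx) (r : Tm) (E : PCtx) :
    Step (E₀.plug (shift r)) (.ctx E) (reset (substT 0 (contOf (E.comp E₀)) r)) :=
  step_ctx_plug E₀ (fun E => reset (substT 0 (contOf E) r)) (fun E => .shiftCap E) E

theorem exists_plug_shift_of_step_ctx {t t' : Tm} {E : PCtx} (h : Step t (.ctx E) t') :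
    ∃ E₀ r, t = E₀.plug (shift r) ∧ t' = reset (substT 0 (contOf (E.comp E₀)) r) := by
  generalize hl : Label.ctx E = l at h
  induction h generalizing E with
  | shiftCap => cases hl; exact ⟨.hole, _, rfl, rfl⟩
  | @capL _ _ t1 _ _ ih =>
    cases hl
    obtain ⟨E₀, r, rfl, rfl⟩ := ih rfl
    refine ⟨(PCtx.appL .hole t1).comp E₀, r, by rw [PCtx.plug_comp]; rfl, ?_⟩
    rw [← PCtx.comp_assoc]
    rfl
  | @capR b _ _ _ _ ih =>
    cases hl
    obtain ⟨E₀, r, rfl, rfl⟩ := ih rfl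
    refine ⟨(PCtx.appV b .hole).comp E₀, r, by rw [PCtx.plug_comp]; rfl, ?_⟩
    rw [← PCtx.comp_assoc]
    rfl
  | _ => cases hl

theorem step_val_inv {t v t' : Tm} (h : Step t (.val v) t') :
    ∃ b, t = lam b ∧ t' = substT 0 v b := by
  cases h
  exact ⟨_, rfl, rfl⟩

theorem not_step_tau_of_step_ctx {t t' u : Tm} {E : PCtx} (h : Step t (.ctx E) t') :
    ¬ Step t .tau u := by
  generalize hl : Label.ctx E = l at h
  induction h generalizing E u with
  | shiftCap => intro hu; cases hu
  | capL h ih =>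
    intro hu
    cases hu with
    | beta => cases h
    | appL hu => exact ih rfl hu
    | appR hv => obtain ⟨_, rfl⟩ := hv; cases h
  | capR h ih =>
    intro hu
    cases hu with
    | beta hv => obtain ⟨_, rfl⟩ := hv; cases h
    | appL hu => cases hu
    | appR _ hu => exact ih rfl hu
  | _ => cases hl

theorem step_ctx_deterministic {t a b : Tm} {E : PCtx} (ha : Step t (.ctx E) a)
    (hb : Step t (.ctx E) b) : a = b := by
  generalize hl : Label.ctx E = l at ha
  induction ha generalizing E b with
  | shiftCap => cases hl; cases hb; rfl
  | capL h ih =>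
    cases hl
    cases hb with
    | capL hb => exact ih hb rfl
    | capR => cases h
  | capR h ih =>
    cases hl
    cases hb with
    | capL hb => cases hb
    | capR hb => exact ih hb rfl
  | _ => cases hl

theorem step_tau_deterministic : Relator.RightUnique fun t u => Step t .tau u := by
  intro t a b ha hb
  generalize hl : Label.tau = l at ha
  induction ha generalizing b with
  | beta hv =>
    cases hb with
    | beta => rfl
    | appL h => cases h
    | appR _ h => obtain ⟨_, rfl⟩ := hv; cases h
  | resetVal hv =>
    obtain ⟨_, rfl⟩ := hv
    cases hb with
    | resetVal => rfl
    | resetT h | resetCap h => cases h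
  | appL h ih =>
    cases hb with
    | beta => cases h
    | appL hb => rw [ih hb rfl]
    | appR hv => obtain ⟨_, rfl⟩ := hv; cases h
  | appR hv h ih =>
    obtain ⟨_, rfl⟩ := hv
    cases hb with
    | beta hv => obtain ⟨_, rfl⟩ := hv; cases h
    | appL hb => cases hb
    | appR _ hb => rw [ih hb rfl]
  | resetT h ih =>
    cases hb with
    | resetVal hv => obtain ⟨_, rfl⟩ := hv; cases h
    | resetT hb => rw [ih hb rfl]
    | resetCap hb => exact absurd h (not_step_tau_of_step_ctx hb)
  | resetCap h =>
    cases hb with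
    | resetVal hv => obtain ⟨_, rfl⟩ := hv; cases h
    | resetT hb => exact absurd hb (not_step_tau_of_step_ctx h)
    | resetCap hb => exact step_ctx_deterministic h hb
  | _ => cases hl

/-! ### Transitions and reduction -/

def LabClosed : Label → Prop
  | .tau => True
  | .val v => Closed v
  | .ctx E => PCtxClosedUnder 0 E

theorem Step.closed {t t' : Tm} {l : Label} (h : Step t l t') (ht : Closed t)
    (hl : LabClosed l) : Closed t' := by
  induction h with
  | beta _ => exact closedUnder_substT ht.2 ht.1
  | resetVal _ => exact ht
  | appL _ ih => exact ⟨ih ht.1 trivial, ht.2⟩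
  | appR _ _ ih => exact ⟨ht.1, ih ht.2 trivial⟩
  | resetT _ ih | resetCap _ ih => exact ih ht trivial
  | lamApp _ => exact closedUnder_substT hl ht
  | shiftCap E => exact closedUnder_substT (closed_contOf hl) ht
  | capL _ ih => exact ih ht.1 ⟨hl, ht.2⟩
  | capR _ ih => exact ih ht.2 ⟨ht.1, hl⟩

theorem TauStar.closed {t t' : Tm} (h : TauStar t t') (ht : Closed t) : Closed t' := by
  induction h with
  | refl => exact ht
  | tail _ hs ih => exact hs.closed ih trivial

theorem Weak.closed {t t' : Tm} {l : Label} (h : Weak t l t') (ht : Closed t)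
    (hl : LabClosed l) : Closed t' := by
  cases l with
  | tau => exact TauStar.closed h ht
  | val _ | ctx _ =>
    obtain ⟨u, htu, hu⟩ := h
    exact hu.closed (htu.closed ht) hl

theorem weak_of_step {t t' : Tm} {l : Label} (h : Step t l t') : Weak t l t' := by
  cases l with
  | tau => exact .single h
  | val _ | ctx _ => exact ⟨t, .refl, h⟩

theorem tauStar_lam {b u : Tm} (h : TauStar (lam b) u) : u = lam b := by
  rcases Relation.ReflTransGen.cases_head h with h | ⟨_, hs, _⟩
  · exact h.symm
  · cases hs

theorem tauStar_lam_unique {t b b' : Tm} (h : TauStar t (lam b)) (h' : TauStar t (lam b')) :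
    b = b' := by
  rcases Relation.ReflTransGen.total_of_right_unique step_tau_deterministic h h' with h | h
  · exact (Tm.lam.inj (tauStar_lam h)).symm
  · exact Tm.lam.inj (tauStar_lam h)

theorem tauStar_app_left {a a' : Tm} (h : TauStar a a') (b : Tm) :
    TauStar (app a b) (app a' b) :=
  Relation.ReflTransGen.lift (fun t => app t b) (fun _ _ => Step.appL) _ _ h

theorem tauStar_app {a b c c' : Tm} (ha : TauStar a (lam b)) (hc : TauStar c c') :
    TauStar (app a c) (app (lam b) c') :=
  (tauStar_app_left ha c).trans <|
    Relation.ReflTransGen.lift (app (lam b)) (fun _ _ => Step.appR ⟨b, rfl⟩) _ _ hc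

theorem tauStar_reset {a a' : Tm} (h : TauStar a a') : TauStar (reset a) (reset a') :=
  Relation.ReflTransGen.lift reset (fun _ _ => Step.resetT) _ _ h

def ECtx.comp : ECtx → ECtx → ECtx
  | F, .hole => F
  | F, .appV b F' => .appV b (F.comp F')
  | F, .appL F' s => .appL (F.comp F') s
  | F, .resetC F' => .resetC (F.comp F')

theorem ECtx.plug_comp (F F' : ECtx) (t : Tm) : (F.comp F').plug t = F.plug (F'.plug t) := by
  induction F' generalizing t with
  | hole => rfl
  | appV _ _ ih | appL _ _ ih | resetC _ ih => exact ih _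

theorem Red.plug {a a' : Tm} (h : Red a a') (G : ECtx) : Red (G.plug a) (G.plug a') := by
  cases h with
  | beta F t v hv => simpa only [ECtx.plug_comp] using Red.beta (G.comp F) t v hv
  | cap F E t => simpa only [ECtx.plug_comp] using Red.cap (G.comp F) E t
  | res F v hv => simpa only [ECtx.plug_comp] using Red.res (G.comp F) v hv

theorem Step.plug_tau {t t' : Tm} (h : Step t .tau t') (F : ECtx) :
    Step (F.plug t) .tau (F.plug t') := by
  induction F generalizing t t' with
  | hole => exact h
  | appV b F ih => exact ih (.appR ⟨b, rfl⟩ h)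
  | appL F s ih => exact ih (.appL h)
  | resetC F ih => exact ih (.resetT h)

theorem red_iff_step_tau {t u : Tm} : Red t u ↔ Step t .tau u := by
  constructor
  · rintro (⟨F, t, v, hv⟩ | ⟨F, E, t⟩ | ⟨F, v, hv⟩)
    · exact (Step.beta hv).plug_tau F
    · refine (Step.resetCap ?_).plug_tau F
      simpa only [PCtx.hole_comp] using step_plug_shift E t .hole
    · exact (Step.resetVal hv).plug_tau F
  · intro h
    generalize hl : Label.tau = l at h
    induction h with
    | beta hv => exact .beta .hole _ _ hv
    | resetVal hv => exact .res .hole _ hv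
    | @appL _ _ t1 _ ih => exact (ih hl).plug (.appL .hole t1)
    | appR hv _ ih =>
      obtain ⟨b, rfl⟩ := hv
      exact (ih hl).plug (.appV b .hole)
    | resetT _ ih => exact (ih hl).plug (.resetC .hole)
    | resetCap h =>
      obtain ⟨E₀, r, rfl, rfl⟩ := exists_plug_shift_of_step_ctx h
      rw [PCtx.hole_comp]
      exact .cap .hole E₀ r
    | _ => cases hl

theorem redStar_iff_tauStar {t u : Tm} : RedStar t u ↔ TauStar t u :=
  ⟨Relation.ReflTransGen.mono (fun _ _ => red_iff_step_tau.mp) t u,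
    Relation.ReflTransGen.mono (fun _ _ => red_iff_step_tau.mpr) t u⟩

theorem exists_eq_plug_shift_of_irreducible {t : Tm} (hc : Closed t) (hv : ¬ IsValue t)
    (hirr : ∀ u, ¬ Step t .tau u) : ∃ E r, t = PCtx.plug E (shift r) := by
  induction t with
  | var k => exact absurd hc (Nat.not_lt_zero k)
  | lam b => exact absurd ⟨b, rfl⟩ hv
  | shift r => exact ⟨.hole, r, rfl⟩
  | app a b iha ihb =>
    by_cases hva : IsValue a
    · obtain ⟨c, rfl⟩ := hva
      have hvb : ¬ IsValue b := fun hvb => hirr _ (.beta hvb)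
      obtain ⟨E, r, rfl⟩ := ihb hc.2 hvb fun u hu => hirr _ (.appR ⟨c, rfl⟩ hu)
      exact ⟨(PCtx.appV c .hole).comp E, r, by rw [PCtx.plug_comp]; rfl⟩
    · obtain ⟨E, r, rfl⟩ := iha hc.1 hva fun u hu => hirr _ (.appL hu)
      exact ⟨(PCtx.appL .hole b).comp E, r, by rw [PCtx.plug_comp]; rfl⟩
  | reset t ih =>
    have hvt : ¬ IsValue t := fun hvt => hirr _ (.resetVal hvt)
    obtain ⟨E, r, rfl⟩ := ih hc hvt fun u hu => hirr _ (.resetT hu)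
    exact absurd (.resetCap (step_plug_shift E r .hole)) (hirr _)

theorem evalsToValue_iff {t : Tm} : EvalsToValue t ↔ ∃ b, TauStar t (lam b) := by
  constructor
  · rintro ⟨_, ⟨b, rfl⟩, htb, -⟩
    exact ⟨b, redStar_iff_tauStar.mp htb⟩
  · rintro ⟨b, htb⟩
    exact ⟨lam b, ⟨b, rfl⟩, redStar_iff_tauStar.mpr htb,
      fun _ hb => nomatch red_iff_step_tau.mp hb⟩

theorem evalsToStuck_iff {t : Tm} : EvalsToStuck t ↔ ∃ s, Stuck s ∧ TauStar t s :=
  ⟨fun ⟨s, hs, hts, _⟩ => ⟨s, hs, redStar_iff_tauStar.mp hts⟩,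
    fun ⟨s, hs, hts⟩ => ⟨s, hs, redStar_iff_tauStar.mpr hts, hs.2⟩⟩

theorem stuck_of_step_ctx {t t' : Tm} {E : PCtx} (h : Step t (.ctx E) t') : Stuck t := by
  refine ⟨?_, fun u hu => not_step_tau_of_step_ctx h (red_iff_step_tau.mp hu)⟩
  rintro ⟨b, rfl⟩
  cases h

theorem Stuck.exists_eq_plug_shift {s : Tm} (h : Stuck s) (hc : Closed s) :
    ∃ E r, s = PCtx.plug E (shift r) :=
  exists_eq_plug_shift_of_irreducible hc h.1 fun u hu => h.2 u (red_iff_step_tau.mpr hu)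

/-! ### Bisimilarity -/

theorem IsSim.tauStar {R : Tm → Tm → Prop} (hR : IsSim R) {t0 t0' t1 : Tm}
    (h : TauStar t0 t0') (hr : R t0 t1) : ∃ t1', TauStar t1 t1' ∧ R t0' t1' := by
  induction h with
  | refl => exact ⟨t1, .refl, hr⟩
  | tail _ hs ih =>
    obtain ⟨u, htu, hu⟩ := ih
    obtain ⟨t1', hut, ht⟩ := hR hu hs
    exact ⟨t1', htu.trans hut, ht⟩

theorem IsSim.weak {R : Tm → Tm → Prop} (hR : IsSim R) {t0 t0' t1 : Tm} {l : Label}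
    (hr : R t0 t1) (h : Weak t0 l t0') : ∃ t1', Weak t1 l t1' ∧ R t0' t1' := by
  cases l with
  | tau => exact hR.tauStar h hr
  | val _ | ctx _ =>
    obtain ⟨u0, ht0u, hu0⟩ := h
    obtain ⟨u1, ht1u, hu⟩ := hR.tauStar ht0u hr
    obtain ⟨t1', ⟨w, huw, hw⟩, ht⟩ := hR hu hu0
    exact ⟨t1', ⟨w, ht1u.trans huw, hw⟩, ht⟩

theorem Bisim.symm {t0 t1 : Tm} (h : Bisim t0 t1) : Bisim t1 t0 :=
  let ⟨R, ⟨hR, hR'⟩, hr⟩ := h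
  ⟨flip R, ⟨hR', hR⟩, hr⟩

theorem Bisim.weak {t0 t0' t1 : Tm} {l : Label} (h : Bisim t0 t1) (hw : Weak t0 l t0') :
    ∃ t1', Weak t1 l t1' ∧ Bisim t0' t1' :=
  let ⟨R, hR, hr⟩ := h
  let ⟨t1', hw', hr'⟩ := hR.1.weak hr hw
  ⟨t1', hw', R, hR, hr'⟩

theorem Bisim.step {t0 t0' t1 : Tm} {l : Label} (h : Bisim t0 t1) (hs : Step t0 l t0') :
    ∃ t1', Weak t1 l t1' ∧ Bisim t0' t1' :=
  h.weak (weak_of_step hs)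

def idLam : Tm := lam (var 0)

theorem closingSub_idLam : ClosingSub fun _ => idLam :=
  fun _ => ⟨⟨var 0, rfl⟩, Nat.zero_lt_one⟩

theorem openExt_iff_of_closed {R : Tm → Tm → Prop} {t0 t1 : Tm} (h0 : Closed t0)
    (h1 : Closed t1) : OpenExt R t0 t1 ↔ R t0 t1 := by
  constructor
  · intro h
    simpa only [applySub_of_closed _ h0, applySub_of_closed _ h1] using h _ closingSub_idLam
  · intro h σ _
    rwa [applySub_of_closed σ h0, applySub_of_closed σ h1]

theorem applySub_eq_substT {b : Tm} {σ : ℕ → Tm} (hb : ClosedUnder 1 b) (hσ : Closed (σ 0)) :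
    applySub σ b = substT 0 (σ 0) b := by
  rw [substT_eq_applySub hσ]
  refine applySub_congr hb fun k hk => ?_
  obtain rfl : k = 0 := Nat.lt_one_iff.mp hk
  rfl

/-- Since τ-steps are deterministic, the λ-abstraction reached by `A` does not depend on the
argument with which `lam b0` is tested. -/
theorem exists_tauStar_lam_of_bisim {b0 A : Tm} (h : Bisim (lam b0) A) (hb0 : ClosedUnder 1 b0)
    (hA : Closed A) : ∃ b1, TauStar A (lam b1) ∧ ClosedUnder 1 b1 ∧ OpenExt Bisim b0 b1 := by
  have happ : ∀ v, IsValue v →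
      ∃ b1, TauStar A (lam b1) ∧ Bisim (substT 0 v b0) (substT 0 v b1) := by
    intro v hv
    obtain ⟨_, ⟨u, hAu, hu⟩, hb⟩ := h.step (Step.lamApp (t := b0) hv)
    obtain ⟨b1, rfl, rfl⟩ := step_val_inv hu
    exact ⟨b1, hAu, hb⟩
  obtain ⟨b1, hAb1, -⟩ := happ idLam ⟨var 0, rfl⟩
  have hb1 : ClosedUnder 1 b1 := hAb1.closed hA
  refine ⟨b1, hAb1, hb1, fun σ hσ => ?_⟩
  obtain ⟨b1', hAb1', hb⟩ := happ (σ 0) (hσ 0).1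
  obtain rfl := tauStar_lam_unique hAb1 hAb1'
  rwa [applySub_eq_substT hb0 (hσ 0).2, applySub_eq_substT hb1 (hσ 0).2]

/-! ### Howe's closure -/

def ValVarSub (σ : ℕ → Tm) : Prop := ∀ n, IsValue (σ n) ∨ ∃ m, σ n = var m

theorem valVarSub_liftSub {σ : ℕ → Tm} (h : ValVarSub σ) : ValVarSub (liftSub σ) := by
  rintro (_ | n)
  · exact .inr ⟨0, rfl⟩
  · rcases h n with ⟨b, hb⟩ | ⟨m, hm⟩
    · exact .inl ⟨liftT 1 1 b, by simp [liftSub, hb, liftT]⟩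
    · exact .inr ⟨m + 1, by simp [liftSub, hm, liftT]⟩

theorem closingSub_applySub {ρ σ : ℕ → Tm} (hρ : ClosingSub ρ) (hσ : ValVarSub σ) :
    ClosingSub fun n => applySub ρ (σ n) := by
  intro n
  beta_reduce
  rcases hσ n with ⟨b, hb⟩ | ⟨m, hm⟩
  · rw [hb]
    exact ⟨⟨_, rfl⟩, closedUnder_applySub_closing hρ⟩
  · rw [hm]
    exact hρ m

theorem openExt_liftT {R : Tm → Tm → Prop} {a b : Tm} (h : OpenExt R a b) (d c : ℕ) :
    OpenExt R (liftT d c a) (liftT d c b) := by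
  intro ρ hρ
  rw [applySub_liftT, applySub_liftT]
  refine h _ fun n => ?_
  split_ifs
  exacts [hρ n, hρ (n + d)]

theorem openExt_applySub {R : Tm → Tm → Prop} {a b : Tm} (h : OpenExt R a b) {σ : ℕ → Tm}
    (hσ : ValVarSub σ) : OpenExt R (applySub σ a) (applySub σ b) := by
  intro ρ hρ
  rw [applySub_applySub, applySub_applySub]
  exact h _ (closingSub_applySub hρ hσ)

/-- The key lemma is proved by induction on `n`, the number of uses of the `right` rule: closing
the middle term of a `right` rule (`HoweN.exists_closed_middle`) yields a new derivation, not a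
subderivation. -/
inductive HoweN : ℕ → Tm → Tm → Prop
  | base {n t0 t1} : OpenExt Bisim t0 t1 → HoweN n t0 t1
  | right {n t0 t2 t1} : HoweN n t0 t2 → OpenExt Bisim t2 t1 → HoweN (n + 1) t0 t1
  | compVar {n} (k : ℕ) : HoweN n (var k) (var k)
  | compLam {n t0 t1} : HoweN n t0 t1 → HoweN n (lam t0) (lam t1)
  | compApp {n a0 a1 b0 b1} : HoweN n a0 a1 → HoweN n b0 b1 → HoweN n (app a0 b0) (app a1 b1)
  | compShift {n t0 t1} : HoweN n t0 t1 → HoweN n (shift t0) (shift t1)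
  | compReset {n t0 t1} : HoweN n t0 t1 → HoweN n (reset t0) (reset t1)

theorem howeN_refl (n : ℕ) (t : Tm) : HoweN n t t := by
  induction t with
  | var k => exact .compVar k
  | lam _ ih => exact .compLam ih
  | app _ _ iha ihb => exact .compApp iha ihb
  | shift _ ih => exact .compShift ih
  | reset _ ih => exact .compReset ih

theorem HoweN.howe {n : ℕ} {t0 t1 : Tm} (h : HoweN n t0 t1) : Howe t0 t1 := by
  induction h with
  | base h => exact .base h
  | right _ h ih => exact .right ih h
  | compVar k => exact .compVar k
  | compLam _ ih => exact .compLam ih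
  | compApp _ _ iha ihb => exact .compApp iha ihb
  | compShift _ ih => exact .compShift ih
  | compReset _ ih => exact .compReset ih

theorem howe_refl (t : Tm) : Howe t t :=
  (howeN_refl 0 t).howe

theorem HoweN.mono {n m : ℕ} {t0 t1 : Tm} (h : HoweN n t0 t1) (hnm : n ≤ m) :
    HoweN m t0 t1 := by
  induction h generalizing m with
  | base h => exact .base h
  | right _ h ih =>
    obtain ⟨m, rfl⟩ : ∃ m', m = m' + 1 := ⟨m - 1, by omega⟩
    exact .right (ih (by omega)) h
  | compVar k => exact .compVar k
  | compLam _ ih => exact .compLam (ih hnm)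
  | compApp _ _ iha ihb => exact .compApp (iha hnm) (ihb hnm)
  | compShift _ ih => exact .compShift (ih hnm)
  | compReset _ ih => exact .compReset (ih hnm)

theorem exists_howeN {t0 t1 : Tm} (h : Howe t0 t1) : ∃ n, HoweN n t0 t1 := by
  induction h with
  | base h => exact ⟨0, .base h⟩
  | right _ h ih =>
    obtain ⟨n, hn⟩ := ih
    exact ⟨n + 1, .right hn h⟩
  | compVar k => exact ⟨0, .compVar k⟩
  | compLam _ ih =>
    obtain ⟨n, hn⟩ := ih
    exact ⟨n, .compLam hn⟩
  | compApp _ _ iha ihb =>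
    obtain ⟨n, hn⟩ := iha
    obtain ⟨m, hm⟩ := ihb
    exact ⟨max n m, .compApp (hn.mono (le_max_left n m)) (hm.mono (le_max_right n m))⟩
  | compShift _ ih =>
    obtain ⟨n, hn⟩ := ih
    exact ⟨n, .compShift hn⟩
  | compReset _ ih =>
    obtain ⟨n, hn⟩ := ih
    exact ⟨n, .compReset hn⟩

theorem howeN_applySub {n : ℕ} {t0 t1 : Tm} (h : HoweN n t0 t1) {σ : ℕ → Tm}
    (hσ : ValVarSub σ) : HoweN n (applySub σ t0) (applySub σ t1) := by
  induction h generalizing σ with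
  | base h => exact .base (openExt_applySub h hσ)
  | right _ h ih => exact .right (ih hσ) (openExt_applySub h hσ)
  | compVar k => exact howeN_refl _ _
  | compLam _ ih => exact .compLam (ih (valVarSub_liftSub hσ))
  | compApp _ _ iha ihb => exact .compApp (iha hσ) (ihb hσ)
  | compShift _ ih => exact .compShift (ih (valVarSub_liftSub hσ))
  | compReset _ ih => exact .compReset (ih hσ)

theorem howe_of_bisim {t0 t1 : Tm} (h0 : Closed t0) (h1 : Closed t1) (h : Bisim t0 t1) :
    Howe t0 t1 :=
  .base ((openExt_iff_of_closed h0 h1).mpr h)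

theorem howe_liftT {a b : Tm} (h : Howe a b) (d c : ℕ) : Howe (liftT d c a) (liftT d c b) := by
  induction h generalizing c with
  | base h => exact .base (openExt_liftT h d c)
  | right _ h ih => exact .right (ih c) (openExt_liftT h d c)
  | compVar k =>
    simp only [liftT]
    split_ifs <;> exact .compVar _
  | compLam _ ih => exact .compLam (ih (c + 1))
  | compApp _ _ iha ihb => exact .compApp (iha c) (ihb c)
  | compShift _ ih => exact .compShift (ih (c + 1))
  | compReset _ ih => exact .compReset (ih c)

theorem howe_liftSub {σ0 σ1 : ℕ → Tm} (h : ∀ n, Howe (σ0 n) (σ1 n)) (n : ℕ) :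
    Howe (liftSub σ0 n) (liftSub σ1 n) := by
  cases n with
  | zero => exact .compVar 0
  | succ n => exact howe_liftT (h n) 1 0

theorem howe_applySub_of_sub (t : Tm) {σ0 σ1 : ℕ → Tm} (h : ∀ n, Howe (σ0 n) (σ1 n)) :
    Howe (applySub σ0 t) (applySub σ1 t) := by
  induction t generalizing σ0 σ1 with
  | var k => exact h k
  | lam _ ih => exact .compLam (ih (howe_liftSub h))
  | app _ _ iha ihb => exact .compApp (iha h) (ihb h)
  | shift _ ih => exact .compShift (ih (howe_liftSub h))
  | reset _ ih => exact .compReset (ih h)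

theorem howe_applySub {t0 t1 : Tm} (h : Howe t0 t1) {σ0 σ1 : ℕ → Tm} (hσ1 : ValVarSub σ1)
    (hσ : ∀ n, Howe (σ0 n) (σ1 n)) : Howe (applySub σ0 t0) (applySub σ1 t1) := by
  induction h generalizing σ0 σ1 with
  | base h => exact .right (howe_applySub_of_sub _ hσ) (openExt_applySub h hσ1)
  | right _ h ih => exact .right (ih hσ1 hσ) (openExt_applySub h hσ1)
  | compVar k => exact hσ k
  | compLam _ ih => exact .compLam (ih (valVarSub_liftSub hσ1) (howe_liftSub hσ))
  | compApp _ _ iha ihb => exact .compApp (iha hσ1 hσ) (ihb hσ1 hσ)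
  | compShift _ ih => exact .compShift (ih (valVarSub_liftSub hσ1) (howe_liftSub hσ))
  | compReset _ ih => exact .compReset (ih hσ1 hσ)

theorem howe_substT {t0 t1 v0 v1 : Tm} (h : Howe t0 t1) (hv : Howe v0 v1) (hv1 : IsValue v1)
    (hc0 : Closed v0) (hc1 : Closed v1) : Howe (substT 0 v0 t0) (substT 0 v1 t1) := by
  rw [substT_eq_applySub hc0, substT_eq_applySub hc1]
  refine howe_applySub h ?_ ?_
  · rintro (_ | n)
    exacts [.inl hv1, .inr ⟨n, rfl⟩]
  · rintro (_ | n)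
    exacts [hv, howe_refl _]

theorem howe_ctxPlug (C : Ctx) {a b : Tm} (h : Howe a b) : Howe (C.plug a) (C.plug b) := by
  induction C with
  | hole => exact h
  | lam _ ih => exact .compLam ih
  | appL _ s ih => exact .compApp ih (howe_refl s)
  | appR s _ ih => exact .compApp (howe_refl s) ih
  | shift _ ih => exact .compShift ih
  | reset _ ih => exact .compReset ih

theorem pctxHowe_refl (E : PCtx) : PCtxHowe E E := by
  induction E with
  | hole => exact .hole
  | appV b _ ih => exact .appV (howe_refl b) ih
  | appL _ s ih => exact .appL ih (howe_refl s)

theorem pctxHowe_comp {A0 A1 B0 B1 : PCtx} (hA : PCtxHowe A0 A1) (hB : PCtxHowe B0 B1) :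
    PCtxHowe (A0.comp B0) (A1.comp B1) := by
  induction hB with
  | hole => exact hA
  | appV hb _ ih => exact .appV hb ih
  | appL _ ht ih => exact .appL ih ht

theorem pctxHowe_liftC {E0 E1 : PCtx} (h : PCtxHowe E0 E1) (d c : ℕ) :
    PCtxHowe (PCtx.liftC d c E0) (PCtx.liftC d c E1) := by
  induction h generalizing c with
  | hole => exact .hole
  | appV hb _ ih => exact .appV (howe_liftT hb d (c + 1)) (ih c)
  | appL _ ht ih => exact .appL (ih c) (howe_liftT ht d c)

theorem howe_pctxPlug {E0 E1 : PCtx} (h : PCtxHowe E0 E1) {u v : Tm} (huv : Howe u v) :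
    Howe (E0.plug u) (E1.plug v) := by
  induction h generalizing u v with
  | hole => exact huv
  | appV hb _ ih => exact ih (.compApp (.compLam hb) huv)
  | appL _ ht ih => exact ih (.compApp huv ht)

theorem howe_contOf {E0 E1 : PCtx} (h : PCtxHowe E0 E1) :
    Howe (contOf E0) (contOf E1) :=
  .compLam (.compReset (howe_pctxPlug (pctxHowe_liftC h 1 0) (.compVar 0)))

theorem HoweN.exists_closed_middle {m : ℕ} {t0 t2 t1 : Tm} (h : HoweN m t0 t2)
    (hb : OpenExt Bisim t2 t1) (hc0 : Closed t0) (hc1 : Closed t1) :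
    ∃ t2', Closed t2' ∧ HoweN m t0 t2' ∧ Bisim t2' t1 := by
  refine ⟨applySub (fun _ => idLam) t2, closedUnder_applySub_closing closingSub_idLam, ?_, ?_⟩
  · simpa only [applySub_of_closed _ hc0] using
      howeN_applySub h (σ := fun _ => idLam) fun n => .inl (closingSub_idLam n).1
  · simpa only [applySub_of_closed _ hc1] using hb _ closingSub_idLam

theorem HoweN.exists_tauStar_lam {n : ℕ} {b A : Tm} (h : HoweN n (lam b) A)
    (hb : ClosedUnder 1 b) (hA : Closed A) :
    ∃ b', TauStar A (lam b') ∧ ClosedUnder 1 b' ∧ Howe b b' := by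
  induction n using Nat.strong_induction_on generalizing b A with
  | _ n ih =>
  cases h with
  | base h =>
    obtain ⟨b', hAb', hb', hbb'⟩ :=
      exists_tauStar_lam_of_bisim ((openExt_iff_of_closed (t0 := lam b) hb hA).mp h) hb hA
    exact ⟨b', hAb', hb', .base hbb'⟩
  | right h h' =>
    obtain ⟨t2, hc2, h2, hb2⟩ := h.exists_closed_middle h' hb hA
    obtain ⟨b2, ht2, hcb2, hbb2⟩ := ih _ (Nat.lt_succ_self _) h2 hb hc2
    obtain ⟨u, hAu, hu⟩ := hb2.weak (l := .tau) ht2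
    obtain ⟨b1, hub1, hb1, hb21⟩ := exists_tauStar_lam_of_bisim hu hcb2 (TauStar.closed hAu hA)
    exact ⟨b1, (hAu : TauStar A u).trans hub1, hb1, .right hbb2 hb21⟩
  | compLam h => exact ⟨_, .refl, hA, h.howe⟩

/-! ### The key lemma -/

/-- Value labels are identical, as applicative bisimilarity tests both sides with the same
argument; context labels are related by `PCtxHowe`, which makes the captured continuations
`contOf E` Howe-related. -/
inductive ClosedLabRel : Label → Label → Prop
  | tau : ClosedLabRel .tau .tau
  | val {v : Tm} : Closed v → ClosedLabRel (.val v) (.val v)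
  | ctx {E E' : PCtx} : PCtxHowe E E' → PCtxClosedUnder 0 E → PCtxClosedUnder 0 E' →
      ClosedLabRel (.ctx E) (.ctx E')

theorem ClosedLabRel.labClosed_left {l l' : Label} (h : ClosedLabRel l l') : LabClosed l := by
  cases h <;> trivial

theorem ClosedLabRel.labClosed_right {l l' : Label} (h : ClosedLabRel l l') : LabClosed l' := by
  cases h <;> trivial

def HoweMatches (R : Tm → Tm → Prop) (t0 : Tm) (l : Label) (t0' : Tm) : Prop :=
  ∀ ⦃t1⦄, R t0 t1 → Closed t0 → Closed t1 → ∀ ⦃l'⦄, ClosedLabRel l l' →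
    ∃ t1', Weak t1 l' t1' ∧ HoweC t0' t1'

theorem howeMatches_bisim {t0 t0' : Tm} {l : Label} (hs : Step t0 l t0') :
    HoweMatches Bisim t0 l t0' := by
  intro t1 hb hc0 hc1 l' hl
  have hc0' := hs.closed hc0 hl.labClosed_left
  have hl' := hl.labClosed_right
  cases hl with
  | tau | val _ =>
    obtain ⟨t1', hw, hb'⟩ := hb.step hs
    have hc1' := hw.closed hc1 hl'
    exact ⟨t1', hw, hc0', hc1', howe_of_bisim hc0' hc1' hb'⟩
  | @ctx E E' hEE' hE hE' =>
    obtain ⟨E₀, r, rfl, rfl⟩ := exists_plug_shift_of_step_ctx hs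
    obtain ⟨hE₀, hr⟩ := closedUnder_pctxPlug_iff.mp hc0
    obtain ⟨t1', hw, hb'⟩ := hb.step (step_plug_shift E₀ r E')
    have hc1' := hw.closed hc1 hl'
    have hcont := closed_contOf (hE.comp hE₀)
    have hcont' := closed_contOf (hE'.comp hE₀)
    have hmid : Closed (reset (substT 0 (contOf (E'.comp E₀)) r)) := closedUnder_substT hcont' hr
    -- `t0'` is Howe-related to the capture of `E'` by `t0`, which is bisimilar to `t1'`
    refine ⟨t1', hw, hc0', hc1',
      .right (.compReset ?_) ((openExt_iff_of_closed hmid hc1').mpr hb')⟩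
    exact howe_substT (howe_refl r) (howe_contOf (pctxHowe_comp hEE' (pctxHowe_refl E₀)))
      ⟨_, rfl⟩ hcont hcont'

inductive CompatRefine (R : Tm → Tm → Prop) : Tm → Tm → Prop
  | compVar (k : ℕ) : CompatRefine R (var k) (var k)
  | compLam {t0 t1} : R t0 t1 → CompatRefine R (lam t0) (lam t1)
  | compApp {a0 a1 b0 b1} : R a0 a1 → R b0 b1 → CompatRefine R (app a0 b0) (app a1 b1)
  | compShift {t0 t1} : R t0 t1 → CompatRefine R (shift t0) (shift t1)
  | compReset {t0 t1} : R t0 t1 → CompatRefine R (reset t0) (reset t1)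

theorem howeMatches_howeN_of_compat {n : ℕ}
    (ihn : ∀ m < n, ∀ {t0 t0' l}, Step t0 l t0' → HoweMatches (HoweN m) t0 l t0')
    {t0 t0' : Tm} {l : Label} (hs : Step t0 l t0')
    (hcomp : HoweMatches (CompatRefine (HoweN n)) t0 l t0') :
    HoweMatches (HoweN n) t0 l t0' := by
  intro t1 h hc0 hc1 l' hl
  cases h with
  | base h => exact howeMatches_bisim hs ((openExt_iff_of_closed hc0 hc1).mp h) hc0 hc1 hl
  | right h h' =>
    obtain ⟨t2, hc2, h2, hb2⟩ := h.exists_closed_middle h' hc0 hc1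
    obtain ⟨u, hw, -, hcu, hu⟩ := ihn _ (Nat.lt_succ_self _) hs h2 hc0 hc2 hl
    obtain ⟨t1', hw', hb'⟩ := hb2.weak hw
    have hc1' := hw'.closed hc1 hl.labClosed_right
    exact ⟨t1', hw', hs.closed hc0 hl.labClosed_left, hc1',
      .right hu ((openExt_iff_of_closed hcu hc1').mpr hb')⟩
  | compVar k => exact hcomp (.compVar k) hc0 hc1 hl
  | compLam h => exact hcomp (.compLam h) hc0 hc1 hl
  | compApp ha hb => exact hcomp (.compApp ha hb) hc0 hc1 hl
  | compShift h => exact hcomp (.compShift h) hc0 hc1 hl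
  | compReset h => exact hcomp (.compReset h) hc0 hc1 hl

section Compat

variable {n : ℕ}

theorem howeMatches_compat_beta {t v : Tm} (hv : IsValue v) :
    HoweMatches (CompatRefine (HoweN n)) (app (lam t) v) .tau (substT 0 v t) := by
  intro _ h hc0 hc1 _ hl
  cases hl
  cases h with | compApp hA hB => ?_
  obtain ⟨c, rfl⟩ := hv
  obtain ⟨b1, hAb1, hb1, htb1⟩ := hA.exists_tauStar_lam hc0.1 hc1.1
  obtain ⟨c1, hBc1, hc1', hcc1⟩ := hB.exists_tauStar_lam hc0.2 hc1.2
  exact ⟨_, (tauStar_app hAb1 hBc1).tail (.beta ⟨c1, rfl⟩), closedUnder_substT hc0.2 hc0.1,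
    closedUnder_substT hc1' hb1, howe_substT htb1 (.compLam hcc1) ⟨c1, rfl⟩ hc0.2 hc1'⟩

theorem howeMatches_compat_resetVal {v : Tm} (hv : IsValue v) :
    HoweMatches (CompatRefine (HoweN n)) (reset v) .tau v := by
  intro _ h hc0 hc1 _ hl
  cases hl
  cases h with | compReset hB => ?_
  obtain ⟨c, rfl⟩ := hv
  obtain ⟨c1, hBc1, hc1', hcc1⟩ := hB.exists_tauStar_lam hc0 hc1
  exact ⟨_, (tauStar_reset hBc1).tail (.resetVal ⟨c1, rfl⟩), hc0, hc1', .compLam hcc1⟩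

theorem howeMatches_compat_appL {a a' b : Tm} (ih : HoweMatches (HoweN n) a .tau a') :
    HoweMatches (CompatRefine (HoweN n)) (app a b) .tau (app a' b) := by
  intro _ h hc0 hc1 _ hl
  cases hl
  cases h with | compApp hA hB => ?_
  obtain ⟨u, hAu, hca', hcu, hu⟩ := ih hA hc0.1 hc1.1 .tau
  exact ⟨_, tauStar_app_left hAu _, ⟨hca', hc0.2⟩, ⟨hcu, hc1.2⟩, .compApp hu hB.howe⟩

theorem howeMatches_compat_appR {v b b' : Tm} (hv : IsValue v)
    (ih : HoweMatches (HoweN n) b .tau b') :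
    HoweMatches (CompatRefine (HoweN n)) (app v b) .tau (app v b') := by
  intro _ h hc0 hc1 _ hl
  cases hl
  cases h with | compApp hA hB => ?_
  obtain ⟨c, rfl⟩ := hv
  obtain ⟨c1, hAc1, hc1', hcc1⟩ := hA.exists_tauStar_lam hc0.1 hc1.1
  obtain ⟨u, hBu, hcb', hcu, hu⟩ := ih hB hc0.2 hc1.2 .tau
  exact ⟨_, tauStar_app hAc1 hBu, ⟨hc0.1, hcb'⟩, ⟨hc1', hcu⟩,
    .compApp (.compLam hcc1) hu⟩

theorem howeMatches_compat_resetT {b b' : Tm} (ih : HoweMatches (HoweN n) b .tau b') :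
    HoweMatches (CompatRefine (HoweN n)) (reset b) .tau (reset b') := by
  intro _ h hc0 hc1 _ hl
  cases hl
  cases h with | compReset hB => ?_
  obtain ⟨u, hBu, hcb', hcu, hu⟩ := ih hB hc0 hc1 .tau
  exact ⟨_, tauStar_reset hBu, hcb', hcu, .compReset hu⟩

theorem howeMatches_compat_resetCap {b b' : Tm} (ih : HoweMatches (HoweN n) b (.ctx .hole) b') :
    HoweMatches (CompatRefine (HoweN n)) (reset b) .tau b' := by
  intro _ h hc0 hc1 _ hl
  cases hl
  cases h with | compReset hB => ?_
  obtain ⟨u, ⟨m, hBm, hm⟩, hu⟩ := ih hB hc0 hc1 (.ctx .hole trivial trivial)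
  exact ⟨u, (tauStar_reset hBm).tail (.resetCap hm), hu⟩

theorem howeMatches_compat_lamApp {b v : Tm} (hv : IsValue v) :
    HoweMatches (CompatRefine (HoweN n)) (lam b) (.val v) (substT 0 v b) := by
  intro _ h hc0 hc1 _ hl
  cases hl with | val hcv => ?_
  cases h with | compLam hB => ?_
  exact ⟨_, weak_of_step (.lamApp hv), closedUnder_substT hcv hc0, closedUnder_substT hcv hc1,
    howe_substT hB.howe (howe_refl v) hv hcv hcv⟩

theorem howeMatches_compat_shiftCap {b : Tm} (E : PCtx) :
    HoweMatches (CompatRefine (HoweN n)) (shift b) (.ctx E) (reset (substT 0 (contOf E) b)) := by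
  intro _ h hc0 hc1 _ hl
  cases hl with | ctx hEE' hE hE' => ?_
  cases h with | compShift hB => ?_
  exact ⟨_, weak_of_step (.shiftCap _), closedUnder_substT (closed_contOf hE) hc0,
    closedUnder_substT (closed_contOf hE') hc1,
    .compReset (howe_substT hB.howe (howe_contOf hEE') ⟨_, rfl⟩ (closed_contOf hE)
      (closed_contOf hE'))⟩

theorem howeMatches_compat_capL {a a' b : Tm} {E : PCtx}
    (ih : HoweMatches (HoweN n) a (.ctx (.appL E b)) a') :
    HoweMatches (CompatRefine (HoweN n)) (app a b) (.ctx E) a' := by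
  intro _ h hc0 hc1 _ hl
  cases hl with | ctx hEE' hE hE' => ?_
  cases h with | compApp hA hB => ?_
  obtain ⟨u, ⟨m, hAm, hm⟩, hu⟩ :=
    ih hA hc0.1 hc1.1 (.ctx (.appL hEE' hB.howe) ⟨hE, hc0.2⟩ ⟨hE', hc1.2⟩)
  exact ⟨u, ⟨_, tauStar_app_left hAm _, .capL hm⟩, hu⟩

theorem howeMatches_compat_capR {c b b' : Tm} {E : PCtx}
    (ih : HoweMatches (HoweN n) b (.ctx (.appV c E)) b') :
    HoweMatches (CompatRefine (HoweN n)) (app (lam c) b) (.ctx E) b' := by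
  intro _ h hc0 hc1 _ hl
  cases hl with | ctx hEE' hE hE' => ?_
  cases h with | compApp hA hB => ?_
  obtain ⟨c1, hAc1, hc1', hcc1⟩ := hA.exists_tauStar_lam hc0.1 hc1.1
  obtain ⟨u, ⟨m, hBm, hm⟩, hu⟩ :=
    ih hB hc0.2 hc1.2 (.ctx (.appV hcc1 hEE') ⟨hc0.1, hE⟩ ⟨hc1', hE'⟩)
  exact ⟨u, ⟨_, tauStar_app hAc1 hBm, .capR hm⟩, hu⟩

end Compat

theorem howeMatches_howeN (n : ℕ) {t0 t0' : Tm} {l : Label} (hs : Step t0 l t0') :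
    HoweMatches (HoweN n) t0 l t0' := by
  induction n using Nat.strong_induction_on generalizing t0 l t0' with
  | _ n ihn =>
  induction hs with
  | beta hv => exact howeMatches_howeN_of_compat ihn (.beta hv) (howeMatches_compat_beta hv)
  | resetVal hv =>
    exact howeMatches_howeN_of_compat ihn (.resetVal hv) (howeMatches_compat_resetVal hv)
  | appL h ih => exact howeMatches_howeN_of_compat ihn (.appL h) (howeMatches_compat_appL ih)
  | appR hv h ih =>
    exact howeMatches_howeN_of_compat ihn (.appR hv h) (howeMatches_compat_appR hv ih)
  | resetT h ih =>
    exact howeMatches_howeN_of_compat ihn (.resetT h) (howeMatches_compat_resetT ih)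
  | resetCap h ih =>
    exact howeMatches_howeN_of_compat ihn (.resetCap h) (howeMatches_compat_resetCap ih)
  | lamApp hv =>
    exact howeMatches_howeN_of_compat ihn (.lamApp hv) (howeMatches_compat_lamApp hv)
  | shiftCap E =>
    exact howeMatches_howeN_of_compat ihn (.shiftCap E) (howeMatches_compat_shiftCap E)
  | capL h ih => exact howeMatches_howeN_of_compat ihn (.capL h) (howeMatches_compat_capL ih)
  | capR h ih => exact howeMatches_howeN_of_compat ihn (.capR h) (howeMatches_compat_capR ih)

/-! ### Soundness -/

theorem HoweC.step {a a' b : Tm} {l l' : Label} (h : HoweC a b) (hs : Step a l a')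
    (hl : ClosedLabRel l l') : ∃ b', Weak b l' b' ∧ HoweC a' b' := by
  obtain ⟨hca, hcb, hab⟩ := h
  obtain ⟨n, hn⟩ := exists_howeN hab
  exact howeMatches_howeN n hs hn hca hcb hl

theorem HoweC.tauStar {a a' b : Tm} (h : HoweC a b) (has : TauStar a a') :
    ∃ b', TauStar b b' ∧ HoweC a' b' := by
  induction has with
  | refl => exact ⟨b, .refl, h⟩
  | tail _ hs ih =>
    obtain ⟨u, hbu, hu⟩ := ih
    obtain ⟨b', hub', hb'⟩ := hu.step hs .tau
    exact ⟨b', hbu.trans hub', hb'⟩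

theorem HoweC.evalsToValue {T0 T1 : Tm} (h : HoweC T0 T1) (hv : EvalsToValue T0) :
    EvalsToValue T1 := by
  obtain ⟨b, hT0b⟩ := evalsToValue_iff.mp hv
  obtain ⟨u, hT1u, hcb, hcu, hbu⟩ := h.tauStar hT0b
  obtain ⟨n, hn⟩ := exists_howeN hbu
  obtain ⟨b', hub', -⟩ := hn.exists_tauStar_lam hcb hcu
  exact evalsToValue_iff.mpr ⟨b', hT1u.trans hub'⟩

theorem HoweC.evalsToStuck {T0 T1 : Tm} (h : HoweC T0 T1) (hs : EvalsToStuck T0) :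
    EvalsToStuck T1 := by
  obtain ⟨s, hstuck, hT0s⟩ := evalsToStuck_iff.mp hs
  obtain ⟨E, r, rfl⟩ := hstuck.exists_eq_plug_shift (hT0s.closed h.1)
  obtain ⟨u, hT1u, hu⟩ := h.tauStar hT0s
  obtain ⟨_, ⟨m, hum, hm⟩, -⟩ :=
    hu.step (step_plug_shift E r .hole) (.ctx .hole trivial trivial)
  exact evalsToStuck_iff.mpr ⟨m, stuck_of_step_ctx hm, hT1u.trans hum⟩

theorem closedUnder_ctxPlug {C : Ctx} {n : ℕ} {t : Tm} (hC : CtxClosedUnder n C) (ht : Closed t) :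
    ClosedUnder n (C.plug t) := by
  induction C generalizing n with
  | hole => exact closedUnder_mono ht (Nat.zero_le n)
  | lam _ ih | shift _ ih | reset _ ih => exact ih hC
  | appL _ _ ih => exact ⟨ih hC.1, hC.2⟩
  | appR _ _ ih => exact ⟨hC.1, ih hC.2⟩

theorem howeC_ctxPlug {C : Ctx} {t0 t1 : Tm} (hC : ClosedCtx C) (h0 : Closed t0) (h1 : Closed t1)
    (h : Bisim t0 t1) : HoweC (C.plug t0) (C.plug t1) :=
  ⟨closedUnder_ctxPlug hC h0, closedUnder_ctxPlug hC h1, howe_ctxPlug C (howe_of_bisim h0 h1 h)⟩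

end LamS
open LamS LamS.Tm in
/-- soundness of applicative bisimilarity w.r.t. contextual
    equivalence. -/
theorem bisim_sound :
    ∀ t0 t1 : Tm, Closed t0 → Closed t1 → Bisim t0 t1 → CtxEquiv t0 t1 := by
  intro t0 t1 hc0 hc1 hb C hC
  have h01 := howeC_ctxPlug hC hc0 hc1 hb
  have h10 := howeC_ctxPlug hC hc1 hc0 hb.symm
  exact ⟨⟨h01.evalsToValue, h10.evalsToValue⟩, ⟨h01.evalsToStuck, h10.evalsToStuck⟩⟩
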